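/- arXiv:1703.00260 — 2 statements merged into one kernel-verified Lean document; each statement's English description precedes it below -/
import Mathlib

section
/- Let (Ω, 𝓕, ℙ) be a probability space with a filtration (𝓕_k)_{k∈ℕ}, and let (y_k), (u_k), (a_k), (b_k) be sequences of nonnegative integrable random variables adapted to (𝓕_k) such that almost surely, for all k, 𝔼[y_{k+1} | 𝓕_k] ≤ (1 + a_k)·y_k − u_k + b_k, and almost surely Σ_k a_k < ∞ and Σ_k b_k < ∞. Then, almost surely, the sequence (y_k) converges to a finite limit and Σ_k u_k < ∞. -/
/-!
Dividing by `∏_{j<k} (1 + a_j)` absorbs the factor `1 + a_k` of the recursion: with `U_k` and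
`B_k` the partial sums of `u_j / ∏_{i≤j} (1 + a_i)` and `b_j / ∏_{i≤j} (1 + a_i)`, the process
`Z_k = y_k / ∏_{j<k} (1 + a_j) + U_k - B_k` is a supermartingale. It is bounded below only by
`-B_k`, and `B` is merely almost surely bounded, so `Z` is stopped when `B` first exceeds `N`: the
stopped process is a supermartingale bounded below by `-N`, hence converges almost surely, and it
agrees with `Z` wherever `∑ b ≤ N`. Since `∑ a < ∞` the products converge to a finite limit, so
convergence of `Z` gives convergence of `y` and, as `U_k ≤ Z_k + B_k`, summability of `u`.
-/

open MeasureTheory ProbabilityTheory Filter Real Finset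
open scoped Topology

noncomputable section

namespace MeasureTheory

variable {Ω : Type*} {m0 : MeasurableSpace Ω} {ℱ : Filtration ℕ m0} {μ : Measure Ω}

theorem Supermartingale.sum_mul_sub [IsFiniteMeasure μ] {R : ℝ} {ξ f : ℕ → Ω → ℝ}
    (hf : Supermartingale f ℱ μ) (hξ : StronglyAdapted ℱ ξ) (hbdd : ∀ n ω, ξ n ω ≤ R)
    (hnonneg : ∀ n ω, 0 ≤ ξ n ω) :
    Supermartingale (fun n => ∑ k ∈ range n, ξ k * (f (k + 1) - f k)) ℱ μ := by
  have hneg : (fun n => ∑ k ∈ range n, ξ k * (f (k + 1) - f k)) =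
      -fun n => ∑ k ∈ range n, ξ k * ((-f) (k + 1) - (-f) k) := by
    funext n
    simp only [Pi.neg_apply, ← sum_neg_distrib]
    exact sum_congr rfl fun k _ => by ring
  exact hneg ▸ (hf.neg.sum_mul_sub hξ hbdd hnonneg).neg

theorem Supermartingale.exists_ae_tendsto_of_integrable_le [IsFiniteMeasure μ] {f : ℕ → Ω → ℝ}
    {g : Ω → ℝ} (hf : Supermartingale f ℱ μ) (hg : Integrable g μ) (hgf : ∀ n, g ≤ᵐ[μ] f n) :
    ∀ᵐ ω ∂μ, ∃ c, Tendsto (fun n => f n ω) atTop (𝓝 c) := by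
  have hbdd : ∀ n, eLpNorm ((-f) n) 1 μ ≤
      ENNReal.ofReal (∫ ω, f 0 ω ∂μ + 2 * ∫ ω, |g ω| ∂μ) := by
    intro n
    have hnorm : ∀ᵐ ω ∂μ, ‖f n ω‖ ≤ f n ω + 2 * |g ω| := by
      filter_upwards [hgf n] with ω hω
      rw [Real.norm_eq_abs, abs_le]
      constructor <;> cases abs_cases (g ω) <;> linarith
    calc eLpNorm ((-f) n) 1 μ = ENNReal.ofReal (∫ ω, ‖f n ω‖ ∂μ) := by
          rw [Pi.neg_apply, eLpNorm_neg, eLpNorm_one_eq_lintegral_enorm,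
            ofReal_integral_norm_eq_lintegral_enorm (hf.integrable n)]
      _ ≤ _ := by
        refine ENNReal.ofReal_le_ofReal ?_
        calc ∫ ω, ‖f n ω‖ ∂μ ≤ ∫ ω, f n ω + 2 * |g ω| ∂μ :=
              integral_mono_ae (hf.integrable n).norm
                ((hf.integrable n).add (hg.abs.const_mul 2)) hnorm
          _ = ∫ ω, f n ω ∂μ + 2 * ∫ ω, |g ω| ∂μ := by
              rw [integral_add (hf.integrable n) (hg.abs.const_mul 2), integral_const_mul]
          _ ≤ _ := by
              have := hf.setIntegral_le (Nat.zero_le n) MeasurableSet.univ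
              simp only [Measure.restrict_univ] at this
              linarith
  filter_upwards [hf.neg.exists_ae_tendsto_of_bdd hbdd] with ω ⟨c, hc⟩
  exact ⟨-c, by simpa using hc.neg⟩

end MeasureTheory

namespace RobbinsSiegmund

section Deterministic

variable (a b u y : ℕ → ℝ)

def growth (k : ℕ) : ℝ := ∏ j ∈ range k, (1 + a j)

def discountedSum (k : ℕ) : ℝ := ∑ j ∈ range k, b j / growth a (j + 1)

def compensated (k : ℕ) : ℝ := y k / growth a k + discountedSum a u k - discountedSum a b k

variable {a b u y}

lemma growth_succ (k : ℕ) : growth a (k + 1) = growth a k * (1 + a k) := prod_range_succ _ _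

lemma one_le_growth (ha : ∀ j, 0 ≤ a j) (k : ℕ) : 1 ≤ growth a k :=
  one_le_prod fun j _ => le_add_of_nonneg_right (ha j)

lemma growth_pos (ha : ∀ j, 0 ≤ a j) (k : ℕ) : 0 < growth a k :=
  one_pos.trans_le (one_le_growth ha k)

lemma growth_le_exp_tsum (ha : ∀ j, 0 ≤ a j) (has : Summable a) (k : ℕ) :
    growth a k ≤ exp (∑' j, a j) :=
  (prod_one_add_le_exp_sum _ ha).trans (exp_le_exp.2 (has.sum_le_tsum _ fun j _ => ha j))

lemma tendsto_growth (has : Summable a) :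
    Tendsto (growth a) atTop (𝓝 (∏' j, (1 + a j))) :=
  (Real.multipliable_one_add_of_summable has).tendsto_prod_tprod_nat

lemma discountedSum_succ (k : ℕ) :
    discountedSum a b (k + 1) = discountedSum a b k + b k / growth a (k + 1) :=
  sum_range_succ _ _

lemma div_growth_nonneg (ha : ∀ j, 0 ≤ a j) (hb : ∀ j, 0 ≤ b j) (j k : ℕ) :
    0 ≤ b j / growth a k :=
  div_nonneg (hb j) (growth_pos ha k).le

lemma discountedSum_nonneg (ha : ∀ j, 0 ≤ a j) (hb : ∀ j, 0 ≤ b j) (k : ℕ) :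
    0 ≤ discountedSum a b k :=
  sum_nonneg fun j _ => div_growth_nonneg ha hb j _

lemma monotone_discountedSum (ha : ∀ j, 0 ≤ a j) (hb : ∀ j, 0 ≤ b j) :
    Monotone (discountedSum a b) :=
  monotone_nat_of_le_succ fun k => by
    rw [discountedSum_succ]; exact le_add_of_nonneg_right (div_growth_nonneg ha hb k _)

lemma discountedSum_le_tsum (ha : ∀ j, 0 ≤ a j) (hb : ∀ j, 0 ≤ b j) (hbs : Summable b)
    (k : ℕ) : discountedSum a b k ≤ ∑' j, b j :=
  (sum_le_sum fun j _ => div_le_self (hb j) (one_le_growth ha _)).trans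
    (hbs.sum_le_tsum _ fun j _ => hb j)

lemma neg_discountedSum_le_compensated (ha : ∀ j, 0 ≤ a j) (hu : ∀ j, 0 ≤ u j)
    (hy : ∀ j, 0 ≤ y j) (k : ℕ) : -discountedSum a b k ≤ compensated a b u y k := by
  have := div_growth_nonneg ha hy k k
  have := discountedSum_nonneg ha hu k
  unfold compensated
  linarith

lemma compensated_eq_step (ha : ∀ j, 0 ≤ a j) (k : ℕ) :
    compensated a b u y k = ((1 + a k) * y k - u k + b k) / growth a (k + 1) +
      discountedSum a u (k + 1) - discountedSum a b (k + 1) := by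
  have := (growth_pos ha k).ne'
  have : 1 + a k ≠ 0 := by linarith [ha k]
  rw [compensated, discountedSum_succ, discountedSum_succ, growth_succ]
  field_simp
  ring

theorem tendsto_and_summable_of_tendsto_compensated (ha : ∀ j, 0 ≤ a j) (hb : ∀ j, 0 ≤ b j)
    (hu : ∀ j, 0 ≤ u j) (hy : ∀ j, 0 ≤ y j) (has : Summable a) (hbs : Summable b) {c : ℝ}
    (hZ : Tendsto (compensated a b u y) atTop (𝓝 c)) :
    (∃ l, Tendsto y atTop (𝓝 l)) ∧ Summable u := by
  have hbq : Summable fun j => b j / growth a (j + 1) :=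
    hbs.of_nonneg_of_le (fun j => div_growth_nonneg ha hb j _)
      fun j => div_le_self (hb j) (one_le_growth ha _)
  obtain ⟨M, hM⟩ := hZ.bddAbove_range
  have huq : Summable fun j => u j / growth a (j + 1) := by
    refine summable_of_sum_range_le (c := M + ∑' j, b j) (fun j => div_growth_nonneg ha hu j _)
      fun k => ?_
    have := hM (Set.mem_range_self k)
    have := div_growth_nonneg ha hy k k
    have := discountedSum_le_tsum ha hb hbs k
    change discountedSum a u k ≤ _
    unfold compensated at *
    linarith
  refine ⟨⟨(c - ∑' j, u j / growth a (j + 1) + ∑' j, b j / growth a (j + 1)) *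
    ∏' j, (1 + a j), ?_⟩, ?_⟩
  · refine (((hZ.sub huq.hasSum.tendsto_sum_nat).add hbq.hasSum.tendsto_sum_nat).mul
      (tendsto_growth has)).congr fun k => ?_
    have := (growth_pos ha k).ne'
    simp only [compensated, discountedSum]
    field_simp
    ring
  · refine (huq.mul_right (exp (∑' j, a j))).of_nonneg_of_le hu fun j => ?_
    calc u j = u j / growth a (j + 1) * growth a (j + 1) :=
          (div_mul_cancel₀ _ (growth_pos ha _).ne').symm
      _ ≤ u j / growth a (j + 1) * exp (∑' j, a j) :=
          mul_le_mul_of_nonneg_left (growth_le_exp_tsum ha has _) (div_growth_nonneg ha hu j _)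

end Deterministic

section Localization

variable {B Z : ℕ → ℝ} {N : ℝ}

/-- `Z` stopped when `B` first exceeds `N`, minus `Z 0`. The weight of the `j`-th increment is read
off `B (j + 1)`, which for the discounted sum of `b` is `ℱ j`-measurable: the weights are
predictable. -/
def localize (B Z : ℕ → ℝ) (N : ℝ) (k : ℕ) : ℝ :=
  ∑ j ∈ range k, (if B (j + 1) ≤ N then 1 else 0) * (Z (j + 1) - Z j)

lemma localize_eq_sub (hB : Monotone B) {k : ℕ} (hk : B k ≤ N) : localize B Z N k = Z k - Z 0 := by
  rw [localize, ← sum_range_sub]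
  refine sum_congr rfl fun j hj => ?_
  rw [if_pos ((hB (mem_range.1 hj)).trans hk), one_mul]

lemma sub_le_localize (hB : Monotone B) {c : ℝ} (hZ : ∀ k, B k ≤ N → c ≤ Z k) (h0 : B 0 ≤ N)
    (k : ℕ) : c - Z 0 ≤ localize B Z N k := by
  induction k with
  | zero => simpa [localize] using hZ 0 h0
  | succ k ih =>
    by_cases hk : B (k + 1) ≤ N
    · rw [localize_eq_sub hB hk]; linarith [hZ _ hk]
    · rw [localize, sum_range_succ, if_neg hk, zero_mul, add_zero]; exact ih

end Localization

section Stochastic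

variable {Ω : Type*} {m0 : MeasurableSpace Ω} {μ : Measure Ω} {ℱ : Filtration ℕ m0}
  {a b u y : ℕ → Ω → ℝ}

def compensatedProcess (a b u y : ℕ → Ω → ℝ) (k : ℕ) (ω : Ω) : ℝ :=
  compensated (a · ω) (b · ω) (u · ω) (y · ω) k

lemma measurable_growth (ha : Adapted ℱ a) {k m : ℕ} (hm : m ≤ k + 1) :
    Measurable[ℱ k] fun ω => growth (a · ω) m :=
  Finset.measurable_prod _ fun j hj =>
    measurable_const.add (ha.measurable_le (by simp only [mem_range] at hj; omega))

lemma measurable_discountedSum (ha : Adapted ℱ a) (hb : Adapted ℱ b) {k m : ℕ}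
    (hm : m ≤ k + 1) : Measurable[ℱ k] fun ω => discountedSum (a · ω) (b · ω) m :=
  Finset.measurable_sum _ fun j hj => by
    simp only [mem_range] at hj
    exact (hb.measurable_le (by omega)).div (measurable_growth ha (by omega))

lemma integrable_div_growth {f : Ω → ℝ} (hf : Integrable f μ) (ha : Adapted ℱ a)
    (ha0 : ∀ j ω, 0 ≤ a j ω) (k : ℕ) : Integrable (fun ω => f ω / growth (a · ω) k) μ :=
  hf.mono (hf.aemeasurable.div
      ((measurable_growth ha k.le_succ).mono (ℱ.le k) le_rfl).aemeasurable).aestronglyMeasurable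
    (ae_of_all _ fun ω => by
      rw [norm_div]
      exact div_le_self (norm_nonneg _) ((one_le_growth (ha0 · ω) k).trans (le_abs_self _)))

lemma integrable_discountedSum (ha : Adapted ℱ a) (ha0 : ∀ j ω, 0 ≤ a j ω)
    (hb : ∀ j, Integrable (b j) μ) (k : ℕ) :
    Integrable (fun ω => discountedSum (a · ω) (b · ω) k) μ :=
  integrable_finsetSum _ fun j _ => integrable_div_growth (hb j) ha ha0 _

lemma stronglyAdapted_compensatedProcess (ha : Adapted ℱ a) (hb : Adapted ℱ b)
    (hu : Adapted ℱ u) (hy : Adapted ℱ y) : StronglyAdapted ℱ (compensatedProcess a b u y) :=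
  fun k => ((((hy k).div (measurable_growth ha k.le_succ)).add
    (measurable_discountedSum ha hu k.le_succ)).sub
    (measurable_discountedSum ha hb k.le_succ)).stronglyMeasurable

lemma integrable_compensatedProcess (ha : Adapted ℱ a) (ha0 : ∀ j ω, 0 ≤ a j ω)
    (hb : ∀ j, Integrable (b j) μ) (hu : ∀ j, Integrable (u j) μ) (hy : ∀ j, Integrable (y j) μ)
    (k : ℕ) : Integrable (compensatedProcess a b u y k) μ :=
  ((integrable_div_growth (hy k) ha ha0 k).add (integrable_discountedSum ha ha0 hu k)).sub
    (integrable_discountedSum ha ha0 hb k)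

lemma condExp_compensatedProcess_succ_le [IsFiniteMeasure μ] (ha : Adapted ℱ a)
    (hb : Adapted ℱ b) (hu : Adapted ℱ u) (ha0 : ∀ j ω, 0 ≤ a j ω) (hbi : ∀ j, Integrable (b j) μ)
    (hui : ∀ j, Integrable (u j) μ) (hyi : ∀ j, Integrable (y j) μ) (k : ℕ)
    (hrec : ∀ᵐ ω ∂μ, μ[y (k + 1)|ℱ k] ω ≤ (1 + a k ω) * y k ω - u k ω + b k ω) :
    μ[compensatedProcess a b u y (k + 1)|ℱ k] ≤ᵐ[μ] compensatedProcess a b u y k := by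
  set g : Ω → ℝ := fun ω => (growth (a · ω) (k + 1))⁻¹
  set W : Ω → ℝ := fun ω =>
    discountedSum (a · ω) (u · ω) (k + 1) - discountedSum (a · ω) (b · ω) (k + 1)
  have hsplit : compensatedProcess a b u y (k + 1) = g * y (k + 1) + W := by
    funext ω
    simp only [compensatedProcess, compensated, Pi.add_apply, Pi.mul_apply, g, W]
    ring
  have hgy : Integrable (g * y (k + 1)) μ :=
    (integrable_div_growth (hyi (k + 1)) ha ha0 (k + 1)).congr
      (ae_of_all _ fun ω => by simp [g, div_eq_inv_mul])
  have hWi : Integrable W μ :=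
    (integrable_discountedSum ha ha0 hui _).sub (integrable_discountedSum ha ha0 hbi _)
  have hW : μ[W|ℱ k] = W :=
    condExp_of_stronglyMeasurable (ℱ.le k) ((measurable_discountedSum ha hu le_rfl).sub
      (measurable_discountedSum ha hb le_rfl)).stronglyMeasurable hWi
  have hpull : μ[g * y (k + 1)|ℱ k] =ᵐ[μ] g * μ[y (k + 1)|ℱ k] :=
    condExp_mul_of_stronglyMeasurable_left (measurable_growth ha le_rfl).inv.stronglyMeasurable
      hgy (hyi (k + 1))
  filter_upwards [condExp_add hgy hWi (ℱ k), hpull, hrec] with ω hadd hmul hω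
  have hg0 : 0 ≤ g ω := inv_nonneg.2 (growth_pos (ha0 · ω) _).le
  rw [hsplit, hadd, Pi.add_apply, hmul, hW, compensatedProcess, compensated_eq_step (ha0 · ω),
    div_eq_inv_mul]
  simp only [Pi.mul_apply]
  linarith [mul_le_mul_of_nonneg_left hω hg0]

lemma supermartingale_compensatedProcess [IsFiniteMeasure μ] (ha : Adapted ℱ a)
    (hb : Adapted ℱ b) (hu : Adapted ℱ u) (hy : Adapted ℱ y) (ha0 : ∀ j ω, 0 ≤ a j ω)
    (hbi : ∀ j, Integrable (b j) μ) (hui : ∀ j, Integrable (u j) μ)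
    (hyi : ∀ j, Integrable (y j) μ)
    (hrec : ∀ k, ∀ᵐ ω ∂μ, μ[y (k + 1)|ℱ k] ω ≤ (1 + a k ω) * y k ω - u k ω + b k ω) :
    Supermartingale (compensatedProcess a b u y) ℱ μ :=
  supermartingale_nat (stronglyAdapted_compensatedProcess ha hb hu hy)
    (integrable_compensatedProcess ha ha0 hbi hui hyi)
    fun k => condExp_compensatedProcess_succ_le ha hb hu ha0 hbi hui hyi k (hrec k)

lemma ae_exists_tendsto_compensatedProcess [IsFiniteMeasure μ] (ha : Adapted ℱ a)
    (hb : Adapted ℱ b) (hu : Adapted ℱ u) (hy : Adapted ℱ y) (ha0 : ∀ j ω, 0 ≤ a j ω)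
    (hb0 : ∀ j ω, 0 ≤ b j ω) (hu0 : ∀ j ω, 0 ≤ u j ω) (hy0 : ∀ j ω, 0 ≤ y j ω)
    (hbi : ∀ j, Integrable (b j) μ) (hui : ∀ j, Integrable (u j) μ)
    (hyi : ∀ j, Integrable (y j) μ)
    (hrec : ∀ k, ∀ᵐ ω ∂μ, μ[y (k + 1)|ℱ k] ω ≤ (1 + a k ω) * y k ω - u k ω + b k ω)
    (hbs : ∀ᵐ ω ∂μ, Summable fun k => b k ω) :
    ∀ᵐ ω ∂μ, ∃ c, Tendsto (fun k => compensatedProcess a b u y k ω) atTop (𝓝 c) := by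
  set Z := compensatedProcess a b u y
  set B : ℕ → Ω → ℝ := fun k ω => discountedSum (a · ω) (b · ω) k
  have hB : ∀ ω, Monotone (B · ω) := fun ω => monotone_discountedSum (ha0 · ω) (hb0 · ω)
  have hloc : ∀ N : ℕ, ∀ᵐ ω ∂μ, ∃ c, Tendsto (localize (B · ω) (Z · ω) N) atTop (𝓝 c) := by
    intro N
    set ξ : ℕ → Ω → ℝ := fun k ω => if B (k + 1) ω ≤ N then 1 else 0
    have hξ : StronglyAdapted ℱ ξ := fun k =>
      (Measurable.ite (measurableSet_le (measurable_discountedSum ha hb le_rfl) measurable_const)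
        measurable_const measurable_const).stronglyMeasurable
    have hsup := (supermartingale_compensatedProcess ha hb hu hy ha0 hbi hui hyi hrec).sum_mul_sub
      hξ (R := 1) (fun k ω => by simp only [ξ]; split_ifs <;> norm_num)
      (fun k ω => by simp only [ξ]; split_ifs <;> norm_num)
    have hlow : ∀ k ω, -(N : ℝ) - Z 0 ω ≤ localize (B · ω) (Z · ω) N k := fun k ω =>
      sub_le_localize (hB ω)
        (fun k hk => (neg_le_neg hk).trans (neg_discountedSum_le_compensated (ha0 · ω) (hu0 · ω)
          (hy0 · ω) k))
        (by simp [B, discountedSum]) k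
    have hpt : ∀ k ω, (∑ j ∈ range k, ξ j * (Z (j + 1) - Z j)) ω =
        localize (B · ω) (Z · ω) N k := fun k ω => by
      simp only [Finset.sum_apply, Pi.mul_apply, Pi.sub_apply]
      rfl
    refine (hsup.exists_ae_tendsto_of_integrable_le (g := fun ω => -(N : ℝ) - Z 0 ω)
        ((integrable_const _).sub (integrable_compensatedProcess ha ha0 hbi hui hyi 0))
      fun k => ae_of_all _ fun ω => (hpt k ω).symm ▸ hlow k ω).mono fun ω ⟨c, hc⟩ => ?_
    exact ⟨c, hc.congr fun k => hpt k ω⟩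
  filter_upwards [ae_all_iff.2 hloc, hbs] with ω hω hbω
  obtain ⟨N, hN⟩ := exists_nat_ge (∑' j, b j ω)
  obtain ⟨c, hc⟩ := hω N
  refine ⟨c + Z 0 ω, (hc.add_const _).congr fun k => ?_⟩
  rw [localize_eq_sub (hB ω)
    ((discountedSum_le_tsum (ha0 · ω) (hb0 · ω) hbω k).trans hN), sub_add_cancel]

end Stochastic

end RobbinsSiegmund

theorem robbins_siegmund_general
    {Ω : Type} {m0 : MeasurableSpace Ω} {P : Measure Ω} [IsProbabilityMeasure P]
    (ℱ : MeasureTheory.Filtration ℕ m0)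
    (y u a b : ℕ → Ω → ℝ)
    (hyadp : Adapted ℱ y) (huadp : Adapted ℱ u) (haadp : Adapted ℱ a) (hbadp : Adapted ℱ b)
    (hynn : ∀ k ω, 0 ≤ y k ω) (hunn : ∀ k ω, 0 ≤ u k ω)
    (hann : ∀ k ω, 0 ≤ a k ω) (hbnn : ∀ k ω, 0 ≤ b k ω)
    (hyint : ∀ k, Integrable (y k) P) (huint : ∀ k, Integrable (u k) P)
    (hbint : ∀ k, Integrable (b k) P)
    (hrec : ∀ k, ∀ᵐ ω ∂P, (P[y (k + 1)|ℱ k]) ω ≤ (1 + a k ω) * y k ω - u k ω + b k ω)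
    (ha : ∀ᵐ ω ∂P, Summable fun k => a k ω)
    (hb : ∀ᵐ ω ∂P, Summable fun k => b k ω) :
    ∀ᵐ ω ∂P, (∃ l : ℝ, Tendsto (fun k => y k ω) atTop (nhds l)) ∧
      Summable fun k => u k ω := by
  filter_upwards [RobbinsSiegmund.ae_exists_tendsto_compensatedProcess haadp hbadp huadp hyadp
    hann hbnn hunn hynn hbint huint hyint hrec hb, ha, hb] with ω ⟨c, hZ⟩ haω hbω
  exact RobbinsSiegmund.tendsto_and_summable_of_tendsto_compensated (hann · ω) (hbnn · ω)
    (hunn · ω) (hynn · ω) haω hbω hZ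

theorem robbins_siegmund
    {Ω : Type} {m0 : MeasurableSpace Ω} {P : Measure Ω} [IsProbabilityMeasure P]
    (ℱ : MeasureTheory.Filtration ℕ m0)
    (y u a b : ℕ → Ω → ℝ)
    (hyadp : Adapted ℱ y) (huadp : Adapted ℱ u) (haadp : Adapted ℱ a) (hbadp : Adapted ℱ b)
    (hynn : ∀ k ω, 0 ≤ y k ω) (hunn : ∀ k ω, 0 ≤ u k ω)
    (hann : ∀ k ω, 0 ≤ a k ω) (hbnn : ∀ k ω, 0 ≤ b k ω)
    (hyint : ∀ k, Integrable (y k) P) (huint : ∀ k, Integrable (u k) P)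
    (haint : ∀ k, Integrable (a k) P) (hbint : ∀ k, Integrable (b k) P)
    (hrec : ∀ k, ∀ᵐ ω ∂P, (P[y (k + 1)|ℱ k]) ω ≤ (1 + a k ω) * y k ω - u k ω + b k ω)
    (ha : ∀ᵐ ω ∂P, Summable fun k => a k ω)
    (hb : ∀ᵐ ω ∂P, Summable fun k => b k ω) :
    ∀ᵐ ω ∂P, (∃ l : ℝ, Tendsto (fun k => y k ω) atTop (nhds l)) ∧
      Summable fun k => u k ω :=
  robbins_siegmund_general ℱ y u a b hyadp huadp haadp hbadp hynn hunn hann hbnn hyint huint hbint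
    hrec ha hb
end
end

section
/- Let x ∈ ℝ^n, e_1, e_2 ∈ ℝ^n and α ∈ (0, 1/(√6·L)). Define z := Π[x − α·(T(x) + e_1)], x⁺ := Π[x − α·(T(z) + e_2)] and ρ := 1 − 6·L²·α². Then for every x* ∈ X*: ‖x⁺ − x*‖² ≤ ‖x − x*‖² − (ρ/2)·r_α(x)² + 2·α·⟨x* − z, e_2⟩ + (8 + ρ)·α²·‖e_1‖² + 8·α²·‖e_2‖². (This is the per-iteration recursive relation of the stochastic extragradient method, applied with x = x^k, e_1 = ε_1^k, e_2 = ε_2^k.) -/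
/-!
Testing the obtuse-angle property of the projection at `x⁺` against `x*` and at `z` against `x⁺`,
and using pseudo-monotonicity in the form `⟪T z, z - x*⟫ ≥ 0` (valid since `z ∈ X`), gives
`‖x⁺ - x*‖² ≤ ‖x - x*‖² - ‖x - z‖² - ‖x⁺ - z‖² + 2α⟪T x - T z + e₁ - e₂, x⁺ - z⟫ + 2α⟪x* - z, e₂⟫`.
The cross term is bounded by Lipschitz continuity and absorbed into `‖x - z‖²` and `‖x⁺ - z‖²`
by Young's inequality; finally the projection is nonexpansive, so `r_α(x) ≤ ‖x - z‖ + α‖e₁‖`.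
-/

open Real
open scoped InnerProductSpace NNReal

section MetricProjection

variable {E : Type*} [NormedAddCommGroup E]

def IsMetricProjection (K : Set E) (P : E → E) : Prop :=
  ∀ v, P v ∈ K ∧ ∀ w ∈ K, ‖v - P v‖ ≤ ‖v - w‖

namespace IsMetricProjection

variable {K : Set E} {P : E → E}

theorem mem (hP : IsMetricProjection K P) (v : E) : P v ∈ K := (hP v).1

variable [InnerProductSpace ℝ E]

theorem inner_sub_nonpos (hP : IsMetricProjection K P) (hK : Convex ℝ K) (v : E) {w : E}
    (hw : w ∈ K) : ⟪v - P v, w - P v⟫_ℝ ≤ 0 := by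
  have : Nonempty K := ⟨⟨w, hw⟩⟩
  refine (norm_eq_iInf_iff_real_inner_le_zero hK (hP.mem v)).1 ?_ w hw
  exact le_antisymm (le_ciInf fun w => (hP v).2 w w.2)
    (ciInf_le ⟨0, Set.forall_mem_range.2 fun _ => norm_nonneg _⟩ (⟨P v, hP.mem v⟩ : K))

theorem norm_sub_sq_add_norm_sub_sq_le (hP : IsMetricProjection K P) (hK : Convex ℝ K) (v : E)
    {w : E} (hw : w ∈ K) : ‖P v - w‖ ^ 2 + ‖v - P v‖ ^ 2 ≤ ‖v - w‖ ^ 2 := by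
  have h := hP.inner_sub_nonpos hK v hw
  rw [show v - w = (v - P v) - (w - P v) by abel, norm_sub_sq_real (v - P v),
    ← norm_neg (P v - w), neg_sub]
  linarith

theorem norm_sub_le (hP : IsMetricProjection K P) (hK : Convex ℝ K) (u v : E) :
    ‖P u - P v‖ ≤ ‖u - v‖ := by
  have hu := hP.inner_sub_nonpos hK u (hP.mem v)
  have hv := hP.inner_sub_nonpos hK v (hP.mem u)
  have hfirm : ‖P u - P v‖ ^ 2 ≤ ⟪u - v, P u - P v⟫_ℝ := by
    have : ⟪u - v, P u - P v⟫_ℝ - ‖P u - P v‖ ^ 2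
        = ⟪u - P u, P u - P v⟫_ℝ - ⟪v - P v, P u - P v⟫_ℝ := by
      rw [← real_inner_self_eq_norm_sq, ← inner_sub_left, ← inner_sub_left]
      congr 1; abel
    rw [← neg_sub (P u) (P v), inner_neg_right] at hu
    linarith
  have hcs := real_inner_le_norm (u - v) (P u - P v)
  nlinarith [norm_nonneg (P u - P v), norm_nonneg (u - v)]

theorem extragradient_le (hP : IsMetricProjection K P) (hK : Convex ℝ K) {x d₁ d₂ xs z xp : E}
    {α : ℝ} (hxs : xs ∈ K) (hz : z = P (x - α • d₁)) (hxp : xp = P (x - α • d₂)) :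
    ‖xp - xs‖ ^ 2 ≤ ‖x - xs‖ ^ 2 - ‖x - z‖ ^ 2 - ‖xp - z‖ ^ 2
      + 2 * α * ⟪d₁ - d₂, xp - z⟫_ℝ + 2 * α * ⟪d₂, xs - z⟫_ℝ := by
  have h₂ := hP.norm_sub_sq_add_norm_sub_sq_le hK (x - α • d₂) hxs
  have h₁ := hP.inner_sub_nonpos hK (x - α • d₁) (hP.mem (x - α • d₂))
  rw [← hxp] at h₂ h₁
  rw [← hz] at h₁
  simp only [← real_inner_self_eq_norm_sq, inner_sub_left, inner_sub_right, inner_smul_left,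
    inner_smul_right, real_inner_comm, RCLike.conj_to_real] at h₁ h₂ ⊢
  linarith

theorem extragradient_le_of_lipschitz (hP : IsMetricProjection K P) (hK : Convex ℝ K)
    {T : E → E} {L : ℝ≥0} (hT : LipschitzWith L T) {x e₁ e₂ xs z xp : E} {α : ℝ} (hα : 0 ≤ α)
    (hxs : xs ∈ K) (hTz : 0 ≤ ⟪T z, z - xs⟫_ℝ) (hz : z = P (x - α • (T x + e₁)))
    (hxp : xp = P (x - α • (T z + e₂))) :
    ‖xp - xs‖ ^ 2 ≤ ‖x - xs‖ ^ 2 - ‖x - z‖ ^ 2 - ‖xp - z‖ ^ 2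
      + 2 * α * (L * ‖x - z‖ * ‖xp - z‖) + 2 * α * ((‖e₁‖ + ‖e₂‖) * ‖xp - z‖)
      + 2 * α * ⟪xs - z, e₂⟫_ℝ := by
  have h := hP.extragradient_le hK hxs hz hxp
  have hcross : ⟪(T x + e₁) - (T z + e₂), xp - z⟫_ℝ
      ≤ L * ‖x - z‖ * ‖xp - z‖ + (‖e₁‖ + ‖e₂‖) * ‖xp - z‖ :=
    calc ⟪(T x + e₁) - (T z + e₂), xp - z⟫_ℝ = ⟪(T x - T z) + (e₁ - e₂), xp - z⟫_ℝ := by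
          congr 1; abel
      _ ≤ ‖(T x - T z) + (e₁ - e₂)‖ * ‖xp - z‖ := real_inner_le_norm _ _
      _ ≤ (L * ‖x - z‖ + (‖e₁‖ + ‖e₂‖)) * ‖xp - z‖ := by
          gcongr
          exact (norm_add_le _ _).trans
            (add_le_add (hT.norm_sub_le x z) (_root_.norm_sub_le e₁ e₂))
      _ = L * ‖x - z‖ * ‖xp - z‖ + (‖e₁‖ + ‖e₂‖) * ‖xp - z‖ := by ring
  have hdir : ⟪T z + e₂, xs - z⟫_ℝ ≤ ⟪xs - z, e₂⟫_ℝ := by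
    rw [inner_add_left, real_inner_comm e₂, ← neg_sub z xs, inner_neg_right]
    linarith
  linarith [mul_le_mul_of_nonneg_left hcross hα, mul_le_mul_of_nonneg_left hdir hα]

theorem norm_sub_sq_le_of_perturbation (hP : IsMetricProjection K P) (hK : Convex ℝ K)
    (x d e : E) (α : ℝ) :
    ‖x - P (x - α • d)‖ ^ 2 ≤ 2 * ‖x - P (x - α • (d + e))‖ ^ 2 + 2 * α ^ 2 * ‖e‖ ^ 2 := by
  have hP' : ‖P (x - α • (d + e)) - P (x - α • d)‖ ≤ |α| * ‖e‖ := by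
    refine (hP.norm_sub_le hK _ _).trans_eq ?_
    rw [show x - α • (d + e) - (x - α • d) = -(α • e) by rw [smul_add]; abel, norm_neg,
      norm_smul, Real.norm_eq_abs]
  calc ‖x - P (x - α • d)‖ ^ 2
      ≤ (‖x - P (x - α • (d + e))‖ + ‖P (x - α • (d + e)) - P (x - α • d)‖) ^ 2 := by
        gcongr; exact norm_sub_le_norm_sub_add_norm_sub _ _ _
    _ ≤ 2 * (‖x - P (x - α • (d + e))‖ ^ 2 + ‖P (x - α • (d + e)) - P (x - α • d)‖ ^ 2) :=
        add_sq_le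
    _ ≤ 2 * (‖x - P (x - α • (d + e))‖ ^ 2 + (|α| * ‖e‖) ^ 2) := by gcongr
    _ = 2 * ‖x - P (x - α • (d + e))‖ ^ 2 + 2 * α ^ 2 * ‖e‖ ^ 2 := by rw [mul_pow, sq_abs]; ring

end IsMetricProjection

end MetricProjection

theorem six_mul_sq_mul_sq_lt_one {L α : ℝ} (hL : 0 < L) (hα : 0 ≤ α) (hαL : α < 1 / (√6 * L)) :
    6 * L ^ 2 * α ^ 2 < 1 := by
  have h : α * (√6 * L) < 1 := (lt_div_iff₀ (by positivity)).1 hαL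
  calc 6 * L ^ 2 * α ^ 2 = (α * (√6 * L)) ^ 2 := by
        rw [mul_pow, mul_pow, sq_sqrt (by norm_num)]; ring
    _ < 1 := pow_lt_one₀ (by positivity) h two_ne_zero

/-- Young's inequality in the forms `2αLAB ≤ 6L²α²A² + B²/6` and `2αEB ≤ B²/8 + 8α²E²`,
and `ρA² ≥ (ρ/2)r² - ρα²E₁²`, where `ρ = 1 - 6L²α²`. -/
theorem extragradient_quadratic_le {A B r E₁ E₂ L α : ℝ} (hρ : 6 * L ^ 2 * α ^ 2 ≤ 1)
    (hr : r ^ 2 ≤ 2 * A ^ 2 + 2 * α ^ 2 * E₁ ^ 2) :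
    -A ^ 2 - B ^ 2 + 2 * α * (L * A * B) + 2 * α * ((E₁ + E₂) * B)
      ≤ -((1 - 6 * L ^ 2 * α ^ 2) / 2) * r ^ 2 + (8 + (1 - 6 * L ^ 2 * α ^ 2)) * α ^ 2 * E₁ ^ 2
        + 8 * α ^ 2 * E₂ ^ 2 := by
  have hL : 2 * α * (L * A * B) ≤ 6 * L ^ 2 * α ^ 2 * A ^ 2 + B ^ 2 / 6 := by
    nlinarith [sq_nonneg (6 * L * α * A - B)]
  have hE₁ : 2 * α * (E₁ * B) ≤ B ^ 2 / 8 + 8 * α ^ 2 * E₁ ^ 2 := by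
    nlinarith [sq_nonneg (B - 8 * α * E₁)]
  have hE₂ : 2 * α * (E₂ * B) ≤ B ^ 2 / 8 + 8 * α ^ 2 * E₂ ^ 2 := by
    nlinarith [sq_nonneg (B - 8 * α * E₂)]
  have hA := mul_le_mul_of_nonneg_left hr (sub_nonneg.2 hρ)
  linarith [sq_nonneg B]

theorem extragradient_recursive_relation_general
    {n : ℕ} (X : Set (EuclideanSpace ℝ (Fin n)))
    (hXcv : Convex ℝ X)
    (Proj : EuclideanSpace ℝ (Fin n) → EuclideanSpace ℝ (Fin n))
    (hProj : ∀ v, Proj v ∈ X ∧ ∀ w ∈ X, ‖v - Proj v‖ ≤ ‖v - w‖)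
    (T : EuclideanSpace ℝ (Fin n) → EuclideanSpace ℝ (Fin n))
    (L : ℝ) (hL : 0 < L) (hLip : LipschitzWith (Real.toNNReal L) T)
    (hpm : ∀ v w, 0 ≤ ⟪T v, w - v⟫_ℝ → 0 ≤ ⟪T w, w - v⟫_ℝ)
    (α : ℝ) (hα0 : 0 < α) (hαL : α < 1 / (Real.sqrt 6 * L))
    (x e1 e2 z xp : EuclideanSpace ℝ (Fin n))
    (hz : z = Proj (x - α • (T x + e1)))
    (hxp : xp = Proj (x - α • (T z + e2))) :
    ∀ xs ∈ X, (∀ w ∈ X, 0 ≤ ⟪T xs, w - xs⟫_ℝ) →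
      ‖xp - xs‖ ^ 2 ≤ ‖x - xs‖ ^ 2
        - ((1 - 6 * L ^ 2 * α ^ 2) / 2) * ‖x - Proj (x - α • T x)‖ ^ 2
        + 2 * α * ⟪xs - z, e2⟫_ℝ
        + (8 + (1 - 6 * L ^ 2 * α ^ 2)) * α ^ 2 * ‖e1‖ ^ 2
        + 8 * α ^ 2 * ‖e2‖ ^ 2 := by
  intro xs hxs hsol
  have hP : IsMetricProjection X Proj := hProj
  have hTz : 0 ≤ ⟪T z, z - xs⟫_ℝ := hpm xs z (hsol z (hz ▸ hP.mem _))
  have hstep := hP.extragradient_le_of_lipschitz hXcv hLip hα0.le hxs hTz hz hxp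
  rw [Real.coe_toNNReal L hL.le] at hstep
  have hres := hP.norm_sub_sq_le_of_perturbation hXcv x (T x) e1 α
  rw [← hz] at hres
  have hρ := six_mul_sq_mul_sq_lt_one hL hα0.le hαL
  linarith [extragradient_quadratic_le (B := ‖xp - z‖) (E₂ := ‖e2‖) hρ.le hres]

theorem extragradient_recursive_relation
    {n : ℕ} (X : Set (EuclideanSpace ℝ (Fin n)))
    (hXne : X.Nonempty) (hXcl : IsClosed X) (hXcv : Convex ℝ X)
    (Proj : EuclideanSpace ℝ (Fin n) → EuclideanSpace ℝ (Fin n))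
    (hProj : ∀ v, Proj v ∈ X ∧ ∀ w ∈ X, ‖v - Proj v‖ ≤ ‖v - w‖)
    (T : EuclideanSpace ℝ (Fin n) → EuclideanSpace ℝ (Fin n))
    (L : ℝ) (hL : 0 < L) (hLip : LipschitzWith (Real.toNNReal L) T)
    (hpm : ∀ v w, 0 ≤ ⟪T v, w - v⟫_ℝ → 0 ≤ ⟪T w, w - v⟫_ℝ)
    (hXStarNe : ∃ xs ∈ X, ∀ w ∈ X, 0 ≤ ⟪T xs, w - xs⟫_ℝ)
    (α : ℝ) (hα0 : 0 < α) (hαL : α < 1 / (Real.sqrt 6 * L))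
    (x e1 e2 z xp : EuclideanSpace ℝ (Fin n))
    (hz : z = Proj (x - α • (T x + e1)))
    (hxp : xp = Proj (x - α • (T z + e2))) :
    ∀ xs ∈ X, (∀ w ∈ X, 0 ≤ ⟪T xs, w - xs⟫_ℝ) →
      ‖xp - xs‖ ^ 2 ≤ ‖x - xs‖ ^ 2
        - ((1 - 6 * L ^ 2 * α ^ 2) / 2) * ‖x - Proj (x - α • T x)‖ ^ 2
        + 2 * α * ⟪xs - z, e2⟫_ℝ
        + (8 + (1 - 6 * L ^ 2 * α ^ 2)) * α ^ 2 * ‖e1‖ ^ 2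
        + 8 * α ^ 2 * ‖e2‖ ^ 2 :=
  extragradient_recursive_relation_general X hXcv Proj hProj T L hL hLip hpm α hα0 hαL x e1 e2 z xp
    hz hxp
end
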